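/- Let w be a primitive C'-adic word with directive sequence (τ_n) ∈ C'^ℕ. Then the extension set of the empty word, E(ε,w) = {(a,b) ∈ A×A : the two-letter word ab is a factor of w}, equals: {(1,1),(1,2),(1,3),(2,1),(3,1)} if τ_0 = c11; {(1,3),(2,3),(3,1),(3,2),(3,3)} if τ_0 = c22; {(1,2),(1,3),(2,1),(2,2),(3,2)} if τ_0 = c122; {(1,3),(2,1),(2,2),(2,3),(3,2)} if τ_0 = c211; {(1,2),(1,3),(2,1),(3,1),(3,2)} if τ_0 = c121; {(1,3),(2,1),(2,3),(3,1),(3,2)} if τ_0 = c212. -/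

import Mathlib

/-- Letters `0, 1, 2` stand for the letters `1, 2, 3` of the paper. -/
abbrev Letter := Fin 3

/-- A finite word over the alphabet `{1,2,3}`. -/
abbrev Word := List Letter

/-- Apply a substitution (given by its values on letters) to a finite word. -/
def applySub (σ : Letter → Word) (w : Word) : Word := (w.map σ).flatten

/-- `c11 = c₁² : 1 ↦ 1, 2 ↦ 12, 3 ↦ 13`. -/
def c11 : Letter → Word := ![[0], [0, 1], [0, 2]]

/-- `c22 = c₂² : 1 ↦ 13, 2 ↦ 23, 3 ↦ 3`. -/
def c22 : Letter → Word := ![[0, 2], [1, 2], [2]]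

/-- `c122 = c₁c₂² : 1 ↦ 12, 2 ↦ 132, 3 ↦ 2`. -/
def c122 : Letter → Word := ![[0, 1], [0, 2, 1], [1]]

/-- `c211 = c₂c₁² : 1 ↦ 2, 2 ↦ 213, 3 ↦ 23`. -/
def c211 : Letter → Word := ![[1], [1, 0, 2], [1, 2]]

/-- `c121 = c₁c₂c₁ : 1 ↦ 13, 2 ↦ 132, 3 ↦ 12`. -/
def c121 : Letter → Word := ![[0, 2], [0, 2, 1], [0, 1]]

/-- `c212 = c₂c₁c₂ : 1 ↦ 23, 2 ↦ 213, 3 ↦ 13`. -/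
def c212 : Letter → Word := ![[1, 2], [1, 0, 2], [0, 2]]

/-- The set of substitutions `C'`. -/
def Cprime : Set (Letter → Word) := {c11, c22, c122, c211, c121, c212}

/-- `comps τ r k` is the composition `τ_r ∘ τ_{r+1} ∘ ⋯ ∘ τ_{r+k-1}` acting on words. -/
def comps (τ : ℕ → Letter → Word) : ℕ → ℕ → Word → Word
  | _, 0 => id
  | r, k + 1 => applySub (τ r) ∘ comps τ (r + 1) k

/-- `u` is a prefix of the infinite word `w`. -/
def IsPrefixOfInf (u : Word) (w : ℕ → Letter) : Prop :=
  ∀ (k : ℕ) (hk : k < u.length), u[k] = w k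

/-- `u` is a factor of the infinite word `w`. -/
def FactorOf (u : Word) (w : ℕ → Letter) : Prop :=
  ∃ i : ℕ, u = List.ofFn (fun j : Fin u.length => w (i + j))

/-- The extension set `E(u,w) = {(a,b) : a·u·b is a factor of w}`. -/
def ExtSet (u : Word) (w : ℕ → Letter) : Set (Letter × Letter) :=
  {p | FactorOf ([p.1] ++ u ++ [p.2]) w}

/-- A factor `u` of `w` is bispecial if both projections of `E(u,w)` have at
least two elements. -/
def Bispecial (u : Word) (w : ℕ → Letter) : Prop :=
  1 < (Prod.fst '' ExtSet u w).ncard ∧ 1 < (Prod.snd '' ExtSet u w).ncard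

/-- A sequence of substitutions is primitive if for every `r` there is `r' > r` such
that every letter occurs in every image `τ_r τ_{r+1} ⋯ τ_{r'-1}(a)`. -/
def Primitive (τ : ℕ → Letter → Word) : Prop :=
  ∀ r : ℕ, ∃ r', r < r' ∧ ∀ a b : Letter, b ∈ comps τ r (r' - r) [a]

/-! Every two-letter factor of `w` lies in a long prefix `τ₀(v)`, hence inside `τ₀(c) τ₀(d)` for
two adjacent letters `c d` of `v`; this bounds `E(ε, w)` by the pairs `adjacentPairs τ₀` readable
across one boundary of two images. Conversely, primitivity yields a desubstituted prefix `u` in which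
every letter has both a successor and a predecessor, so every pair occurring in `τ₀(c) τ₀(d)` for a
fixed `c` and all `d` (or a fixed `d` and all `c`) is a factor of `w`. For the six substitutions
of `C'` these two finite sets coincide, which can be checked by evaluation. -/

lemma applySub_append (σ : Letter → Word) (u v : Word) :
    applySub σ (u ++ v) = applySub σ u ++ applySub σ v := by
  simp [applySub]

lemma applySub_cons (σ : Letter → Word) (c : Letter) (v : Word) :
    applySub σ (c :: v) = σ c ++ applySub σ v := by
  simp [applySub]

lemma applySub_pair (σ : Letter → Word) (c d : Letter) :
    applySub σ [c, d] = σ c ++ σ d := by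
  simp [applySub]

lemma applySub_infix {σ : Letter → Word} {u v : Word} (h : u <:+: v) :
    applySub σ u <:+: applySub σ v := by
  obtain ⟨s, t, rfl⟩ := h
  exact ⟨applySub σ s, applySub σ t, by simp [applySub_append]⟩

lemma comps_append (τ : ℕ → Letter → Word) (r k : ℕ) (u v : Word) :
    comps τ r k (u ++ v) = comps τ r k u ++ comps τ r k v := by
  induction k generalizing r with
  | zero => rfl
  | succ k ih => simp [comps, ih, applySub_append]

lemma comps_add (τ : ℕ → Letter → Word) (r k l : ℕ) (u : Word) :
    comps τ r (k + l) u = comps τ r k (comps τ (r + k) l u) := by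
  induction k generalizing r with
  | zero => simp [comps]
  | succ k ih =>
    rw [Nat.add_right_comm]
    change applySub (τ r) _ = applySub (τ r) _
    rw [ih (r + 1), show r + 1 + k = r + (k + 1) by omega]

lemma comps_zero_succ (τ : ℕ → Letter → Word) (k : ℕ) (u : Word) :
    comps τ 0 (k + 1) u = applySub (τ 0) (comps τ 1 k u) :=
  rfl

lemma comps_zero_eq_applySub_comps (τ : ℕ → Letter → Word) {r n : ℕ} (hr : 0 < r) (hrn : r ≤ n)
    (v : Word) :
    comps τ 0 n v = applySub (τ 0) (comps τ 1 (r - 1) (comps τ r (n - r) v)) := by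
  rw [show n = (r - 1 + (n - r)) + 1 by omega, comps_zero_succ, comps_add,
    show 1 + (r - 1) = r by omega, show r - 1 + (n - r) + 1 - r = n - r by omega]

lemma mem_extSet_nil_iff {w : ℕ → Letter} {x y : Letter} :
    (x, y) ∈ ExtSet [] w ↔ ∃ i, w i = x ∧ w (i + 1) = y := by
  simp only [ExtSet, Set.mem_ofPred_eq, FactorOf]
  constructor
  · rintro ⟨i, h⟩
    simp only [List.nil_append, List.cons_append, List.length_cons, List.length_nil,
      List.ofFn_succ, List.ofFn_zero, List.cons.injEq] at h
    exact ⟨i, h.1.symm, h.2.1.symm⟩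
  · rintro ⟨i, rfl, rfl⟩
    exact ⟨i, by simp [List.ofFn_succ]⟩

lemma IsPrefixOfInf.pair_infix_iff {p : Word} {w : ℕ → Letter} (hp : IsPrefixOfInf p w)
    {x y : Letter} :
    [x, y] <:+: p ↔ ∃ i, i + 2 ≤ p.length ∧ w i = x ∧ w (i + 1) = y := by
  rw [List.infix_iff_getElem?]
  constructor
  · rintro ⟨i, hlen, hget⟩
    have hx := hget 0 (by simp)
    have hy := hget 1 (by simp)
    simp only [List.length_cons, List.length_nil] at hlen
    rw [List.getElem?_eq_getElem (by omega), hp _ (by omega), Option.some_inj] at hx hy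
    exact ⟨i, by omega, by simpa using hx, by simpa [Nat.add_comm] using hy⟩
  · rintro ⟨i, hlen, rfl, rfl⟩
    refine ⟨i, by simp; omega, fun j hj => ?_⟩
    rw [List.getElem?_eq_getElem (by simp at hj; omega), hp _ (by simp at hj; omega)]
    match j, hj with
    | 0, _ => simp
    | 1, _ => simp [Nat.add_comm]

lemma exists_pair_infix_of_mem_left {s t : Word} {c : Letter} (hc : c ∈ s) (ht : t ≠ []) :
    ∃ d, [c, d] <:+: s ++ t := by
  obtain ⟨s₁, s₂, rfl⟩ := List.append_of_mem hc
  obtain ⟨d, r, hdr⟩ := List.exists_cons_of_ne_nil (l := s₂ ++ t) (by simp [ht])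
  exact ⟨d, s₁, r, by simp [hdr]⟩

lemma exists_pair_infix_of_mem_right {s t : Word} {d : Letter} (hd : d ∈ t) (hs : s ≠ []) :
    ∃ c, [c, d] <:+: s ++ t := by
  obtain ⟨t₁, t₂, rfl⟩ := List.append_of_mem hd
  obtain ⟨r, c, hrc⟩ := (List.eq_nil_or_concat' (s ++ t₁)).resolve_left (by simp [hs])
  exact ⟨c, r, t₂, by rw [← List.append_assoc, hrc]; simp⟩

lemma exists_pair_infix_of_infix_applySub {σ : Letter → Word} (hσ : ∀ c, σ c ≠ [])
    {x y : Letter} : ∀ {v : Word}, [x, y] <:+: applySub σ v → ∃ c d, [x, y] <:+: σ c ++ σ d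
  | [], h => by simp [applySub] at h
  | c :: v, h => by
    rw [applySub_cons, List.infix_append_iff_ne_nil] at h
    rcases h with h | h | ⟨l₁, l₂, h₁, h₂, hxy, hs, hp⟩
    · exact ⟨c, c, List.infix_append_of_infix_left h⟩
    · exact exists_pair_infix_of_infix_applySub hσ h
    · obtain ⟨d, v, rfl⟩ : ∃ d v', v = d :: v' := by
        cases v with
        | nil => simp [applySub, h₂] at hp
        | cons d v' => exact ⟨d, v', rfl⟩
      rw [applySub_cons] at hp
      have hp' : l₂ <+: σ d := by
        have hlen : l₂.length ≤ (σ d).length := by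
          have := congrArg List.length hxy
          have := List.length_pos_iff.mpr h₁
          have := List.length_pos_iff.mpr (hσ d)
          simp only [List.length_cons, List.length_nil, List.length_append] at *
          omega
        exact List.prefix_of_prefix_length_le hp (List.prefix_append _ _) hlen
      exact ⟨c, d, List.infix_append_iff.mpr (.inr (.inr ⟨l₁, l₂, hxy, hs, hp'⟩))⟩

lemma Primitive.exists_prefix_forall_adjacent {w : ℕ → Letter} {τ : ℕ → Letter → Word}
    (hprim : Primitive τ) {a : ℕ → Letter}
    (hpref : ∀ n, IsPrefixOfInf (comps τ 0 n [a n]) w) :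
    ∃ u : Word, IsPrefixOfInf (applySub (τ 0) u) w ∧
      (∀ c, ∃ d, [c, d] <:+: u) ∧ (∀ d, ∃ c, [c, d] <:+: u) := by
  obtain ⟨r₁, hr₁, hfull₁⟩ := hprim 1
  obtain ⟨r₂, hr₂, hfull₂⟩ := hprim r₁
  set U : Letter → Word := fun b => comps τ 1 (r₁ - 1) [b]
  have hU : ∀ b, U b ≠ [] := fun b h => by simpa [U, h] using hfull₁ b 0
  -- the level-`r₁` word has two letters since it contains both `0` and `1`
  obtain ⟨d₁, d₂, m, hm⟩ : ∃ d₁ d₂ m, comps τ r₁ (r₂ - r₁) [a r₂] = d₁ :: d₂ :: m := by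
    have h₀ := hfull₂ (a r₂) 0
    have h₁ := hfull₂ (a r₂) 1
    rcases hv : comps τ r₁ (r₂ - r₁) [a r₂] with _ | ⟨e, _ | ⟨f, m⟩⟩
    · simp [hv] at h₀
    · simp only [hv, List.mem_singleton] at h₀ h₁
      exact absurd (h₀.trans h₁.symm) (by decide)
    · exact ⟨e, f, m, rfl⟩
  have hsplit : comps τ 0 r₂ [a r₂] = applySub (τ 0) (U d₁ ++ U d₂ ++ comps τ 1 (r₁ - 1) m) := by
    rw [comps_zero_eq_applySub_comps τ (by omega : 0 < r₁) hr₂.le, hm,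
      show d₁ :: d₂ :: m = [d₁] ++ [d₂] ++ m from rfl, comps_append, comps_append]
  refine ⟨U d₁ ++ U d₂ ++ comps τ 1 (r₁ - 1) m, hsplit ▸ hpref r₂, fun c => ?_, fun d => ?_⟩
  · obtain ⟨d, hd⟩ := exists_pair_infix_of_mem_left (hfull₁ d₁ c) (hU d₂)
    exact ⟨d, hd.trans (List.infix_append_left)⟩
  · obtain ⟨c, hc⟩ := exists_pair_infix_of_mem_right (hfull₁ d₂ d) (hU d₁)
    exact ⟨c, hc.trans (List.infix_append_left)⟩

lemma exists_pair_infix_comps_of_mem_extSet {w : ℕ → Letter} {τ : ℕ → Letter → Word}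
    {a : ℕ → Letter} (hpref : ∀ n, IsPrefixOfInf (comps τ 0 n [a n]) w)
    (hlen : Filter.Tendsto (fun n => (comps τ 0 n [a n]).length) Filter.atTop Filter.atTop)
    {x y : Letter} (hxy : (x, y) ∈ ExtSet [] w) :
    ∃ n, [x, y] <:+: comps τ 0 (n + 1) [a (n + 1)] := by
  obtain ⟨i, hx, hy⟩ := mem_extSet_nil_iff.mp hxy
  obtain ⟨n, hn⟩ := ((Filter.tendsto_add_atTop_iff_nat 1).mpr hlen).eventually_ge_atTop (i + 2)
    |>.exists
  exact ⟨n, (hpref (n + 1)).pair_infix_iff.mpr ⟨i, hn, hx, hy⟩⟩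

def adjacentPairs (σ : Letter → Word) : Finset (Letter × Letter) :=
  Finset.univ.filter fun p => ∃ c d, [p.1, p.2] <:+: σ c ++ σ d

def forcedPairs (σ : Letter → Word) : Finset (Letter × Letter) :=
  Finset.univ.filter fun p =>
    (∃ c, ∀ d, [p.1, p.2] <:+: σ c ++ σ d) ∨ (∃ d, ∀ c, [p.1, p.2] <:+: σ c ++ σ d)

lemma mem_extSet_of_mem_forcedPairs {w : ℕ → Letter} {σ : Letter → Word} {u : Word}
    (hu : IsPrefixOfInf (applySub σ u) w) (hsucc : ∀ c, ∃ d, [c, d] <:+: u)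
    (hpred : ∀ d, ∃ c, [c, d] <:+: u) {p : Letter × Letter} (hp : p ∈ forcedPairs σ) :
    p ∈ ExtSet [] w := by
  have hmem : ∀ c d, [c, d] <:+: u → [p.1, p.2] <:+: σ c ++ σ d → p ∈ ExtSet [] w := by
    intro c d hcd hpair
    obtain ⟨i, -, hx, hy⟩ :=
      hu.pair_infix_iff.mp (hpair.trans (applySub_pair σ c d ▸ applySub_infix hcd))
    exact mem_extSet_nil_iff.mpr ⟨i, hx, hy⟩
  simp only [forcedPairs, Finset.mem_filter, Finset.mem_univ, true_and] at hp
  rcases hp with ⟨c, hc⟩ | ⟨d, hd⟩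
  · obtain ⟨d, hcd⟩ := hsucc c
    exact hmem c d hcd (hc d)
  · obtain ⟨c, hcd⟩ := hpred d
    exact hmem c d hcd (hd c)

theorem extSet_nil_eq_adjacentPairs {w : ℕ → Letter} {τ : ℕ → Letter → Word} {σ : Letter → Word}
    (hprim : Primitive τ) {a : ℕ → Letter} (hpref : ∀ n, IsPrefixOfInf (comps τ 0 n [a n]) w)
    (hlen : Filter.Tendsto (fun n => (comps τ 0 n [a n]).length) Filter.atTop Filter.atTop)
    (hσ : τ 0 = σ) (hne : ∀ c, σ c ≠ []) (hforced : adjacentPairs σ ⊆ forcedPairs σ) :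
    ExtSet [] w = adjacentPairs σ := by
  subst hσ
  obtain ⟨u, hu, hsucc, hpred⟩ := hprim.exists_prefix_forall_adjacent hpref
  ext ⟨x, y⟩
  refine ⟨fun hxy => ?_, fun hxy => mem_extSet_of_mem_forcedPairs hu hsucc hpred (hforced hxy)⟩
  obtain ⟨n, hn⟩ := exists_pair_infix_comps_of_mem_extSet hpref hlen hxy
  rw [comps_zero_succ] at hn
  simpa [adjacentPairs] using exists_pair_infix_of_infix_applySub hne hn

theorem stmt11_general (w : ℕ → Letter) (τ : ℕ → Letter → Word)
    (hprim : Primitive τ)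
    (a : ℕ → Letter) (hpref : ∀ n, IsPrefixOfInf (comps τ 0 n [a n]) w)
    (hlen : Filter.Tendsto (fun n => (comps τ 0 n [a n]).length)
      Filter.atTop Filter.atTop) :
    (τ 0 = c11 → ExtSet [] w = {(0, 0), (0, 1), (0, 2), (1, 0), (2, 0)}) ∧
    (τ 0 = c22 → ExtSet [] w = {(0, 2), (1, 2), (2, 0), (2, 1), (2, 2)}) ∧
    (τ 0 = c122 → ExtSet [] w = {(0, 1), (0, 2), (1, 0), (1, 1), (2, 1)}) ∧
    (τ 0 = c211 → ExtSet [] w = {(0, 2), (1, 0), (1, 1), (1, 2), (2, 1)}) ∧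
    (τ 0 = c121 → ExtSet [] w = {(0, 1), (0, 2), (1, 0), (2, 0), (2, 1)}) ∧
    (τ 0 = c212 → ExtSet [] w = {(0, 2), (1, 0), (1, 2), (2, 0), (2, 1)}) := by
  refine ⟨fun h => ?_, fun h => ?_, fun h => ?_, fun h => ?_, fun h => ?_, fun h => ?_⟩ <;>
  · rw [extSet_nil_eq_adjacentPairs hprim hpref hlen h (by decide) (by decide)]
    ext ⟨x, y⟩
    revert x y
    decide

theorem stmt11 (w : ℕ → Letter) (τ : ℕ → Letter → Word)
    (hτ : ∀ n, τ n ∈ Cprime) (hprim : Primitive τ)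
    (a : ℕ → Letter) (hpref : ∀ n, IsPrefixOfInf (comps τ 0 n [a n]) w)
    (hlen : Filter.Tendsto (fun n => (comps τ 0 n [a n]).length)
      Filter.atTop Filter.atTop) :
    (τ 0 = c11 → ExtSet [] w = {(0, 0), (0, 1), (0, 2), (1, 0), (2, 0)}) ∧
    (τ 0 = c22 → ExtSet [] w = {(0, 2), (1, 2), (2, 0), (2, 1), (2, 2)}) ∧
    (τ 0 = c122 → ExtSet [] w = {(0, 1), (0, 2), (1, 0), (1, 1), (2, 1)}) ∧
    (τ 0 = c211 → ExtSet [] w = {(0, 2), (1, 0), (1, 1), (1, 2), (2, 1)}) ∧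
    (τ 0 = c121 → ExtSet [] w = {(0, 1), (0, 2), (1, 0), (2, 0), (2, 1)}) ∧
    (τ 0 = c212 → ExtSet [] w = {(0, 2), (1, 0), (1, 2), (2, 0), (2, 1)}) :=
  stmt11_general w τ hprim a hpref hlen
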